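/- Let R be a commutative ring and let E be a w-module over R. Then E is an injective R-module if and only if E is injective relative to monomorphisms of w-modules, i.e., for every injective R-linear map i : A → B between w-modules A and B, the induced map Hom_R(B, E) → Hom_R(A, E), f ↦ f ∘ i, is surjective. -/

import Mathlib

universe u v

section WDefs

variable (R : Type u) [CommRing R]

/-- The canonical `R`-linear map `R → Hom_R(J, R)`, `r ↦ (j ↦ r * j)`. -/
def gvCanonicalMap (J : Ideal R) : R →ₗ[R] (J →ₗ[R] R) where
  toFun r := r • (J.subtype)
  map_add' x y := add_smul x y _
  map_smul' r x := by simp [mul_smul]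

/-- A finitely generated ideal `J` of `R` is a GV-ideal (Glaz–Vasconcelos ideal)
if the canonical map `R → Hom_R(J, R)` is an isomorphism. -/
def IsGVIdeal (J : Ideal R) : Prop :=
  J.FG ∧ Function.Bijective (gvCanonicalMap R J)

/-- An ideal `I` of `R` is a w-ideal if whenever `J x ⊆ I` for some GV-ideal `J`,
then `x ∈ I`. -/
def IsWIdeal (I : Ideal R) : Prop :=
  ∀ x : R, (∃ J : Ideal R, IsGVIdeal R J ∧ ∀ j ∈ J, j * x ∈ I) → x ∈ I

/-- `m` is a maximal w-ideal: maximal among the proper w-ideals of `R`. -/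
def IsMaxWIdeal (m : Ideal R) : Prop :=
  IsWIdeal R m ∧ m ≠ ⊤ ∧ ∀ I : Ideal R, IsWIdeal R I → I ≠ ⊤ → m ≤ I → I = m

variable {M : Type v} [AddCommGroup M] [Module R M]

/-- `x` is a GV-torsion element if it is killed by some GV-ideal. -/
def IsGVTorsionElem (x : M) : Prop :=
  ∃ J : Ideal R, IsGVIdeal R J ∧ ∀ j ∈ J, j • x = 0

variable (M)

/-- `M` is GV-torsion-free if it has no nonzero GV-torsion element. -/
def IsGVTorsionFree : Prop := ∀ x : M, IsGVTorsionElem R x → x = 0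

/-- `M` is GV-torsion if all its elements are GV-torsion. -/
def IsGVTorsion : Prop := ∀ x : M, IsGVTorsionElem R x

/-- `M` is a w-module: GV-torsion-free and every map from a GV-ideal to `M`
extends to `R`. -/
def IsWModule : Prop :=
  IsGVTorsionFree R M ∧
    ∀ J : Ideal R, IsGVIdeal R J → ∀ f : J →ₗ[R] M,
      ∃ g : R →ₗ[R] M, ∀ x : J, g (x : R) = f x

end WDefs

/-!
By Baer's criterion it suffices to extend a map `f : I → E` from an ideal to `R`. Because `E` is
a w-module, `f` extends to the w-closure `I_w = {x | J x ⊆ I for some GV-ideal J}`: the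
w-closure of the graph of `f` is again a graph, by GV-torsion-freeness of `E`, and its domain is
all of `I_w`, because maps from GV-ideals into `E` extend to `R`. As w-closure is idempotent,
`I_w` is a w-submodule of the w-module `R`, so relative injectivity extends the map along
`I_w ↪ R`. Both facts rest on GV-ideals being closed under products.
-/

open Function

section GVIdeal

variable {R : Type*} [CommRing R]

@[simp]
theorem gvCanonicalMap_apply (J : Ideal R) (r : R) (x : J) :
    gvCanonicalMap R J r x = r * x := rfl

theorem isGVIdeal_top : IsGVIdeal R ⊤ := by
  refine ⟨⟨{1}, by simp⟩, fun a b hab => ?_, fun f => ⟨f ⟨1, trivial⟩, ?_⟩⟩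
  · simpa using LinearMap.congr_fun hab ⟨1, trivial⟩
  · ext x
    rw [gvCanonicalMap_apply, mul_comm, ← smul_eq_mul, ← map_smul]
    congr 1
    ext
    simp

theorem IsGVIdeal.mul {J K : Ideal R} (hJ : IsGVIdeal R J) (hK : IsGVIdeal R K) :
    IsGVIdeal R (J * K) := by
  refine ⟨hJ.1.mul hK.1, ?_⟩
  -- Restricting along the surjection `J ⊗ K → J * K` is injective and turns the canonical map
  -- of `J * K` into the composite of the (bijective) canonical maps of `J` and `K`.
  let restrict (φ : (J * K : Ideal R) →ₗ[R] R) : J →ₗ[R] K →ₗ[R] R :=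
    TensorProduct.curry (φ ∘ₗ Submodule.mulMap' J K)
  have h_restrict : Injective restrict := fun φ ψ h =>
    (LinearMap.cancel_right (Submodule.mulMap'_surjective J K)).1
      (TensorProduct.curry_injective h)
  have h_comp : Bijective (restrict ∘ gvCanonicalMap R (J * K)) := by
    have h_post : Bijective fun ψ : J →ₗ[R] R => gvCanonicalMap R K ∘ₗ ψ :=
      (LinearEquiv.congrRight (LinearEquiv.ofBijective _ hK.2)).bijective
    convert h_post.comp hJ.2 using 1
    funext r
    ext j k
    simp [restrict, mul_assoc]
  exact ⟨h_comp.1.of_comp, fun φ =>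
    (h_comp.2 (restrict φ)).imp fun _ hr => h_restrict hr⟩

theorem isWModule_self : IsWModule R R := by
  refine ⟨fun x ⟨J, hJ, hx⟩ => hJ.2.1 ?_, fun J hJ f => ?_⟩
  · ext j
    simpa [mul_comm] using hx j j.2
  · obtain ⟨r, rfl⟩ := hJ.2.2 f
    exact ⟨LinearMap.mulLeft R r, fun j => rfl⟩

end GVIdeal

namespace Submodule

variable {R M : Type*} [CommRing R] [AddCommGroup M] [Module R M]

def wClosure (N : Submodule R M) : Submodule R M where
  carrier := {x | ∃ J : Ideal R, IsGVIdeal R J ∧ ∀ j ∈ J, j • x ∈ N}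
  add_mem' := by
    rintro x y ⟨J, hJ, hx⟩ ⟨K, hK, hy⟩
    refine ⟨J * K, hJ.mul hK, fun j hj => ?_⟩
    rw [smul_add]
    exact N.add_mem (hx j (Ideal.mul_le_left hj)) (hy j (Ideal.mul_le_right hj))
  zero_mem' := ⟨⊤, isGVIdeal_top, fun j _ => by simp⟩
  smul_mem' r := by
    rintro x ⟨J, hJ, hx⟩
    exact ⟨J, hJ, fun j hj => by rw [smul_comm]; exact N.smul_mem r (hx j hj)⟩

theorem le_wClosure (N : Submodule R M) : N ≤ N.wClosure :=
  fun _ hx => ⟨⊤, isGVIdeal_top, fun j _ => N.smul_mem j hx⟩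

theorem wClosure_wClosure (N : Submodule R M) : N.wClosure.wClosure = N.wClosure := by
  refine le_antisymm (fun x hx => ?_) (le_wClosure _)
  obtain ⟨J, hJ, hJx⟩ := hx
  -- `J` is finitely generated, so a single GV-ideal `K` can be built generator by generator.
  have key : ∀ J' : Ideal R, J'.FG → (∀ a ∈ J', a • x ∈ N.wClosure) →
      ∃ K : Ideal R, IsGVIdeal R K ∧ K * J' ≤ N.colon {x} := by
    intro J' hJ'
    induction J', hJ' using Submodule.fg_induction with
    | singleton a =>
      intro h
      obtain ⟨K, hK, hKa⟩ := h a (mem_span_singleton_self a)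
      refine ⟨K, hK, Submodule.mul_le.2 fun k hk b hb => ?_⟩
      obtain ⟨c, rfl⟩ := mem_span_singleton.1 hb
      simpa [mul_smul, smul_comm k c] using N.smul_mem c (hKa k hk)
    | sup J₁ J₂ _ _ ih₁ ih₂ =>
      intro h
      obtain ⟨K₁, hK₁, h₁⟩ := ih₁ fun a ha => h a (mem_sup_left ha)
      obtain ⟨K₂, hK₂, h₂⟩ := ih₂ fun a ha => h a (mem_sup_right ha)
      refine ⟨K₁ * K₂, hK₁.mul hK₂, ?_⟩
      rw [mul_sup]
      exact sup_le ((Ideal.mul_mono_left Ideal.mul_le_left).trans h₁)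
        ((Ideal.mul_mono_left Ideal.mul_le_right).trans h₂)
  obtain ⟨K, hK, hKJ⟩ := key J hJ.1 hJx
  exact ⟨K * J, hK.mul hJ, fun j hj => mem_colon_singleton.1 (hKJ hj)⟩

end Submodule

section WModule

variable {R M : Type*} [CommRing R] [AddCommGroup M] [Module R M]

theorem IsWModule.wClosure (hM : IsWModule R M) (N : Submodule R M) :
    IsWModule R N.wClosure := by
  refine ⟨fun x ⟨J, hJ, hx⟩ =>
    Subtype.ext (hM.1 x ⟨J, hJ, fun j hj => congrArg Subtype.val (hx j hj)⟩), fun J hJ f => ?_⟩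
  obtain ⟨g, hg⟩ := hM.2 J hJ (N.wClosure.subtype ∘ₗ f)
  have hg_smul : ∀ j : J, (j : R) • g 1 = f j := fun j => by
    rw [← map_smul, smul_eq_mul, mul_one]
    exact hg j
  have hg_one : g 1 ∈ N.wClosure := by
    rw [← N.wClosure_wClosure]
    exact ⟨J, hJ, fun j hj => hg_smul ⟨j, hj⟩ ▸ (f _).2⟩
  exact ⟨LinearMap.toSpanSingleton R _ ⟨g 1, hg_one⟩, fun j => Subtype.ext (hg_smul j)⟩

end WModule

namespace LinearPMap

variable {R M E : Type*} [CommRing R] [AddCommGroup M] [Module R M] [AddCommGroup E] [Module R E]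

theorem exists_le_domain_eq_wClosure (hE : IsWModule R E) (f : M →ₗ.[R] E) :
    ∃ g : M →ₗ.[R] E, f ≤ g ∧ g.domain = f.domain.wClosure := by
  set Γ := f.graph.wClosure
  have hΓ : ∀ p ∈ Γ, p.1 = 0 → p.2 = 0 := by
    rintro ⟨x, e⟩ ⟨J, hJ, hJp⟩ (rfl : x = 0)
    exact hE.1 e ⟨J, hJ, fun j hj => f.graph_fst_eq_zero_snd (hJp j hj) (smul_zero j)⟩
  refine ⟨Γ.toLinearPMap, le_of_le_graph ?_, ?_⟩
  · rw [Γ.toLinearPMap_graph_eq hΓ]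
    exact Submodule.le_wClosure _
  ext x
  rw [Submodule.toLinearPMap_domain]
  constructor
  · rintro ⟨⟨x, e⟩, ⟨J, hJ, hJp⟩, rfl⟩
    exact ⟨J, hJ, fun j hj => mem_domain_of_mem_graph (hJp j hj)⟩
  · rintro ⟨J, hJ, hJx⟩
    obtain ⟨ψ, hψ⟩ := hE.2 J hJ (f.toFun ∘ₗ (LinearMap.toSpanSingleton R M x).restrict hJx)
    refine ⟨(x, ψ 1), ⟨J, hJ, fun j hj => ?_⟩, rfl⟩
    have hψj : (j : R) • ψ 1 = f ⟨j • x, hJx j hj⟩ := by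
      rw [← ψ.map_smul, smul_eq_mul, mul_one]
      exact hψ ⟨j, hj⟩
    rw [Prod.smul_mk, hψj]
    exact f.mem_graph ⟨j • x, hJx j hj⟩

end LinearPMap

/-- A w-module `E` is an injective `R`-module if and only if `E` is
injective relative to monomorphisms of w-modules: for every injective linear map
`i : A → B` between w-modules, every `f : A → E` factors as `f = g ∘ i`. -/
theorem wModule_injective_iff_relatively_injective {R : Type u} [CommRing R]
    {E : Type u} [AddCommGroup E] [Module R E] (hE : IsWModule R E) :
    Module.Injective R E ↔
      ∀ (A B : Type u) [AddCommGroup A] [AddCommGroup B] [Module R A] [Module R B],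
        IsWModule R A → IsWModule R B →
          ∀ (i : A →ₗ[R] B), Function.Injective i →
            ∀ f : A →ₗ[R] E, ∃ g : B →ₗ[R] E, g.comp i = f := by
  refine ⟨fun hInj A B _ _ _ _ _ _ i hi f => ?_, fun h => Module.Baer.injective fun I f => ?_⟩
  · obtain ⟨g, hg⟩ := hInj.out i hi f
    exact ⟨g, LinearMap.ext hg⟩
  · obtain ⟨g, hfg, hg⟩ := LinearPMap.exists_le_domain_eq_wClosure hE ⟨I, f⟩
    have hA : IsWModule R g.domain := hg ▸ isWModule_self.wClosure I
    obtain ⟨h, hh⟩ := h g.domain R hA isWModule_self g.domain.subtype Subtype.val_injective g.toFun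
    exact ⟨h, fun x hx => (LinearMap.congr_fun hh ⟨x, hfg.1 hx⟩).trans (hfg.2 rfl).symm⟩
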